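/- For every coset spectral system and for all i ∈ I, α ∈ A, z ∈ X one has Σ_{x∈X} M(i, α, x) · S̈_{xz} = Σ_{j∈I} Σ_{β∈A} S_{ij} · conj(Ṡ_{αβ}) · M(j, β, z). -/

import Mathlib

open scoped BigOperators

/-- A modular datum `(I, S, ω, C)`: the genus-zero modular matrices data of §2.1. -/
structure ModularDatum (I : Type*) [Fintype I] [DecidableEq I] : Type _ where
  one : I
  bar : I → I
  bar_invol : Function.Involutive bar
  bar_one : bar one = one
  S : Matrix I I ℂ
  S_symm : ∀ i j, S i j = S j i
  S_unitary : S ∈ Matrix.unitaryGroup I ℂ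
  S_one_im : ∀ i, (S one i).im = 0
  S_one_pos : ∀ i, 0 < (S one i).re
  ω : I → ℂ
  ω_abs : ∀ i, ‖ω i‖ = 1
  ω_one : ω one = 1
  ω_bar : ∀ i, ω (bar i) = ω i
  C : ℂ
  C_abs : ‖C‖ = 1
  rel_STS : (S * Matrix.diagonal (fun i => C * ω i)) ^ 3 = S ^ 2
  rel_Ssq : ∀ i j, (S ^ 2) i j = if j = bar i then 1 else 0

/-- A coset spectral system: three modular data `(I,S,ω,C)`, `(A,Ṡ,ω̇,Ċ)`, `(X,S̈,ω̈,C̈)`,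
a nonnegative function `M` on `I × A × X` with `M(1,1,1) = 1`, and a finite spectral index
set `E` with maps `k, δ, ζ` and nonnegative weights `p`, satisfying the conclusions (a)–(d)
of Lemma A of §3.1 of the paper. -/
structure CosetSpectralSystem (I A X E : Type*)
    [Fintype I] [DecidableEq I] [Fintype A] [DecidableEq A]
    [Fintype X] [DecidableEq X] [Fintype E] : Type _ where
  G : ModularDatum I
  H : ModularDatum A
  Q : ModularDatum X
  M : I → A → X → ℝ
  M_nonneg : ∀ i α x, 0 ≤ M i α x
  M_vac : M G.one H.one Q.one = 1
  k : E → I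
  δ : E → A
  ζ : E → X
  p : E → ℝ
  p_nonneg : ∀ e, 0 ≤ p e
  spec : ∀ i α x, (M i α x : ℂ) =
    ∑ e, (G.S (G.bar i) (k e) / G.S G.one (k e)) *
         (H.S α (δ e) / H.S H.one (δ e)) *
         (Q.S x (ζ e) / Q.S Q.one (ζ e)) * (p e : ℂ)
  vac_node : ∃ e₀, k e₀ = G.one ∧ δ e₀ = H.one ∧ ζ e₀ = Q.one ∧ 0 < p e₀
  phase : ∀ j β y, M j β y ≠ 0 → Q.ω y = G.ω j * (H.ω β)⁻¹
  norm_one : ∑ j, ∑ β, ∑ y,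
    G.S G.one j * star (H.S H.one β) * star (Q.S Q.one y) * (M j β y : ℂ) = 1

/-!
Pack the three modular data into the single datum `G ⊗ conj (H ⊗ Q)` on `I × A × X`, with
matrices `S`, `T = diag (C ω)`. Grouping the spectral index set `E` into fibres turns (a) into
`M = Sᴴ P` with `P w = a w / S₁w` for nonnegative weights `a`, so that `S M = P`; the phase
condition (c) says `T M = C M`. Evaluating `T S T S T = S` at the vacuum and using (d) and
`M(1,1,1) = 1` shows that the weights form a probability vector with `Σ a_w C³ ω_w = 1`, so
`C³ ω_w = 1` on the support of `a`; at `w = 1` this gives `C³ = 1`. Hence `P` is a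
`T`-eigenvector as well, and `(ST)³ = S²` forces `S M = M` (part (1) of the proposition).
Part (2) follows by multiplying with `S̈` and using `S̈ᴴ S̈ = 1`.
-/

open Matrix
open scoped Kronecker

theorem Complex.eq_one_of_sum_mul_eq_sum {ι : Type*} [Fintype ι] {a : ι → ℝ} {z : ι → ℂ}
    (ha : ∀ i, 0 ≤ a i) (hz : ∀ i, ‖z i‖ ≤ 1) (h : ∑ i, (a i : ℂ) * z i = ∑ i, (a i : ℂ))
    {i : ι} (hi : a i ≠ 0) : z i = 1 := by
  have hre_le : ∀ j, (z j).re ≤ 1 := fun j => (Complex.re_le_norm _).trans (hz j)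
  have hsum : ∑ j, a j * (1 - (z j).re) = 0 := by
    have := congrArg Complex.re h
    simp only [Complex.re_sum, Complex.re_ofReal_mul, Complex.ofReal_re] at this
    simp only [mul_sub, mul_one, Finset.sum_sub_distrib, this, sub_self]
  have hre : (z i).re = 1 := by
    have := (Finset.sum_eq_zero_iff_of_nonneg fun j _ =>
      mul_nonneg (ha j) (sub_nonneg.mpr (hre_le j))).mp hsum i (Finset.mem_univ i)
    linarith [(mul_eq_zero.mp this).resolve_left hi]
  have him : (z i).im = 0 := by
    refine Complex.abs_re_eq_norm.mp (le_antisymm ?_ ?_)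
    · exact Complex.abs_re_le_norm _
    · rw [hre, abs_one]; exact hz i
  exact Complex.ext hre him

theorem Matrix.kronecker_pow {R m n : Type*} [CommSemiring R] [Fintype m] [DecidableEq m]
    [Fintype n] [DecidableEq n] (A : Matrix m m R) (B : Matrix n n R) (k : ℕ) :
    (A ⊗ₖ B) ^ k = (A ^ k) ⊗ₖ (B ^ k) := by
  induction k with
  | zero => simp
  | succ k ih => rw [pow_succ, ih, ← mul_kronecker_mul, pow_succ, pow_succ]

theorem Matrix.mulVec_eq_self_of_modular_relation {R n : Type*} [CommRing R] [Fintype n]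
    {S T : Matrix n n R} {m : n → R} {c : R} (hS : Function.Injective S.mulVec)
    (hrel : T * S * T * S * T = S) (hc : c ^ 3 = 1) (hm : T *ᵥ m = c • m)
    (hSm : T *ᵥ S *ᵥ m = c • S *ᵥ m) : S *ᵥ m = m := by
  have hrel_at (v : n → R) : T *ᵥ S *ᵥ T *ᵥ S *ᵥ T *ᵥ v = S *ᵥ v := by
    simp only [mulVec_mulVec, ← Matrix.mul_assoc, hrel]
  have h1 : c ^ 2 • T *ᵥ S *ᵥ S *ᵥ m = S *ᵥ m := by
    have := hrel_at m
    simp only [hm, hSm, mulVec_smul, smul_smul] at this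
    rwa [sq]
  have h2 : T *ᵥ S *ᵥ S *ᵥ m = c • S *ᵥ m := calc
    T *ᵥ S *ᵥ S *ᵥ m = c ^ 3 • T *ᵥ S *ᵥ S *ᵥ m := by rw [hc, one_smul]
    _ = c • c ^ 2 • T *ᵥ S *ᵥ S *ᵥ m := by rw [smul_smul, ← pow_succ']
    _ = c • S *ᵥ m := by rw [h1]
  have h3 : S *ᵥ S *ᵥ m = S *ᵥ m := by
    have := hrel_at (S *ᵥ m)
    simp only [hSm, h2, mulVec_smul, smul_smul] at this
    rwa [← pow_three', hc, one_smul, eq_comm] at this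
  exact hS h3

namespace ModularDatum

variable {I J : Type*} [Fintype I] [DecidableEq I] [Fintype J] [DecidableEq J]
  (D : ModularDatum I)

lemma S_one_ne_zero (i : I) : D.S D.one i ≠ 0 := fun h => by
  simpa [h] using D.S_one_pos i

lemma star_S_one (i : I) : star (D.S D.one i) = D.S D.one i :=
  Complex.conj_eq_iff_im.mpr (D.S_one_im i)

lemma S_mul_star_S : D.S * star D.S = 1 := mem_unitaryGroup_iff.mp D.S_unitary

lemma star_S_mul_S : star D.S * D.S = 1 := mem_unitaryGroup_iff'.mp D.S_unitary

lemma sum_star_S_mul_S (y z : I) : ∑ x, star (D.S x y) * D.S x z = if y = z then 1 else 0 := by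
  simp_rw [← star_apply, ← mul_apply, D.star_S_mul_S, one_apply]

lemma mulVec_S_injective : Function.Injective D.S.mulVec := fun v w h => by
  simpa [mulVec_mulVec, D.star_S_mul_S] using congrArg (star D.S *ᵥ ·) h

lemma S_mul_S_apply (i j : I) : (D.S * D.S) i j = if j = D.bar i then 1 else 0 := by
  rw [← sq, D.rel_Ssq]

-- `Sᴴ = S⁻¹ = S³`, and `S²` is the charge conjugation `i ↦ ī`.
lemma star_S (i j : I) : star (D.S i j) = D.S (D.bar i) j := by
  have h : (star D.S * (D.S * D.S)) j (D.bar i) = D.S j (D.bar i) := by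
    rw [← Matrix.mul_assoc, D.star_S_mul_S, Matrix.one_mul]
  rw [mul_apply] at h
  simp only [S_mul_S_apply, D.bar_invol.injective.eq_iff, star_apply, mul_ite, mul_one, mul_zero,
    Finset.sum_ite_eq, Finset.mem_univ, if_true] at h
  rw [h, D.S_symm]

lemma star_S_apply (i j : I) : (star D.S) i j = D.S (D.bar i) j := by
  rw [star_apply, D.S_symm, star_S]

lemma ω_mul_star_ω (i : I) : D.ω i * star (D.ω i) = 1 := by
  rw [Complex.star_def, Complex.mul_conj', D.ω_abs]; simp

lemma ω_ne_zero (i : I) : D.ω i ≠ 0 := fun h => by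
  simpa [h] using D.ω_abs i

def T : Matrix I I ℂ := diagonal fun i => D.C * D.ω i

lemma T_mul_S_mul_T_mul_S_mul_T : D.T * D.S * D.T * D.S * D.T = D.S := by
  have h : (D.S * D.T) ^ 3 = D.S * D.S := by rw [T, D.rel_STS, sq]
  calc D.T * D.S * D.T * D.S * D.T = star D.S * (D.S * D.T) ^ 3 := by
        simp only [pow_three, ← Matrix.mul_assoc, D.star_S_mul_S, Matrix.one_mul]
    _ = D.S := by rw [h, ← Matrix.mul_assoc, D.star_S_mul_S, Matrix.one_mul]

lemma T_mulVec_eq_smul {m : I → ℂ} (hm : ∀ i, m i ≠ 0 → D.ω i = 1) : D.T *ᵥ m = D.C • m := by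
  ext i
  by_cases h : m i = 0 <;> simp [T, mulVec_diagonal, h, hm i]

def conj : ModularDatum I where
  one := D.one
  bar := D.bar
  bar_invol := D.bar_invol
  bar_one := D.bar_one
  S := D.S.map star
  S_symm i j := by simp [D.S_symm i j]
  S_unitary := map_star_mem_unitaryGroup_iff.mpr D.S_unitary
  S_one_im i := by simp [D.S_one_im i]
  S_one_pos i := by simpa using D.S_one_pos i
  ω i := star (D.ω i)
  ω_abs i := by simpa using D.ω_abs i
  ω_one := by simp [D.ω_one]
  ω_bar i := by simp [D.ω_bar i]
  C := star D.C
  C_abs := by simpa using D.C_abs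
  rel_STS := by
    have hT : (diagonal fun i => star D.C * star (D.ω i)) =
        (starRingEnd ℂ).mapMatrix (diagonal fun i => D.C * D.ω i) := by
      rw [RingHom.mapMatrix_apply, diagonal_map (map_zero _)]
      simp
    change ((starRingEnd ℂ).mapMatrix D.S * _) ^ 3 = ((starRingEnd ℂ).mapMatrix D.S) ^ 2
    rw [hT, ← map_mul, ← map_pow, ← map_pow, D.rel_STS]
  rel_Ssq i j := by
    change (((starRingEnd ℂ).mapMatrix D.S) ^ 2) i j = _
    rw [← map_pow, RingHom.mapMatrix_apply, map_apply, D.rel_Ssq]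
    split_ifs <;> simp

lemma conj_S_apply (i j : I) : D.conj.S i j = star (D.S i j) := rfl

lemma conj_S_bar (i j : I) : D.conj.S (D.conj.bar i) j = D.S i j := by
  rw [conj_S_apply, star_S]; exact congrArg (D.S · j) (D.bar_invol i)

lemma conj_S_one (j : I) : D.conj.S D.conj.one j = D.S D.one j := D.star_S_one j

def prod (D' : ModularDatum J) : ModularDatum (I × J) where
  one := (D.one, D'.one)
  bar := Prod.map D.bar D'.bar
  bar_invol := D.bar_invol.prodMap D'.bar_invol
  bar_one := by simp [D.bar_one, D'.bar_one]
  S := D.S ⊗ₖ D'.S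
  S_symm i j := by simp [D.S_symm i.1, D'.S_symm i.2]
  S_unitary := kronecker_mem_unitary D.S_unitary D'.S_unitary
  S_one_im i := by simp [Complex.mul_im, D.S_one_im, D'.S_one_im]
  S_one_pos i := by
    simpa [Complex.mul_re, D.S_one_im, D'.S_one_im] using
      mul_pos (D.S_one_pos i.1) (D'.S_one_pos i.2)
  ω i := D.ω i.1 * D'.ω i.2
  ω_abs i := by simp [D.ω_abs, D'.ω_abs]
  ω_one := by simp [D.ω_one, D'.ω_one]
  ω_bar i := by simp [D.ω_bar, D'.ω_bar]
  C := D.C * D'.C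
  C_abs := by simp [D.C_abs, D'.C_abs]
  rel_STS := by
    have hT : (diagonal fun i : I × J => D.C * D'.C * (D.ω i.1 * D'.ω i.2)) =
        (diagonal fun i => D.C * D.ω i) ⊗ₖ (diagonal fun j => D'.C * D'.ω j) := by
      rw [diagonal_kronecker_diagonal]; congr 1; ext; ring
    rw [hT, ← mul_kronecker_mul, kronecker_pow, kronecker_pow, D.rel_STS, D'.rel_STS]
  rel_Ssq i j := by
    rw [kronecker_pow, kroneckerMap_apply, D.rel_Ssq, D'.rel_Ssq]
    simp only [Prod.ext_iff, Prod.map_fst, Prod.map_snd]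
    split_ifs <;> simp_all

lemma prod_S_apply (D' : ModularDatum J) (i j : I × J) :
    (D.prod D').S i j = D.S i.1 j.1 * D'.S i.2 j.2 := rfl

lemma C_pow_three_mul_sum_eq {m : I → ℂ} (hm : D.T *ᵥ m = D.C • m) :
    D.C ^ 3 * ∑ w, D.S D.one w * D.ω w * (D.S *ᵥ m) w = (D.S *ᵥ m) D.one := by
  have h := congrFun (congrArg (· *ᵥ m) D.T_mul_S_mul_T_mul_S_mul_T) D.one
  have hT (v : I → ℂ) : D.T *ᵥ v = fun i => D.C * D.ω i * v i :=
    funext fun i => mulVec_diagonal _ _ i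
  simp only [← mulVec_mulVec, hm, mulVec_smul, hT, Pi.smul_apply, smul_eq_mul, D.ω_one] at h
  rw [← h, mulVec, dotProduct, Finset.mul_sum, Finset.mul_sum, Finset.mul_sum]
  exact Finset.sum_congr rfl fun w _ => by ring

theorem S_mulVec_eq_self {m : I → ℂ} {a : I → ℝ} (ha : ∀ w, 0 ≤ a w)
    (hm : m = star D.S *ᵥ fun w => (a w : ℂ) / D.S D.one w) (hvac : m D.one = 1)
    (hnorm : (D.S *ᵥ m) D.one = 1) (hphase : ∀ v, m v ≠ 0 → D.ω v = 1) :
    D.S *ᵥ m = m := by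
  have hSm : D.S *ᵥ m = fun w => (a w : ℂ) / D.S D.one w := by
    rw [hm, mulVec_mulVec, S_mul_star_S, one_mulVec]
  have ha_eq (w : I) : (a w : ℂ) = D.S D.one w * (D.S *ᵥ m) w := by
    rw [hSm, mul_div_cancel₀ _ (D.S_one_ne_zero w)]
  have hsum : ∑ w, (a w : ℂ) = 1 := by
    rw [← hvac, hm]
    simp only [mulVec, dotProduct, star_S_apply, D.bar_one]
    exact Finset.sum_congr rfl fun w _ => (mul_div_cancel₀ _ (D.S_one_ne_zero w)).symm
  have htwist : ∑ w, (a w : ℂ) * (D.C ^ 3 * D.ω w) = ∑ w, (a w : ℂ) := by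
    rw [hsum, ← hnorm, ← D.C_pow_three_mul_sum_eq (D.T_mulVec_eq_smul hphase), Finset.mul_sum]
    exact Finset.sum_congr rfl fun w _ => by rw [ha_eq]; ring
  have hunit (w : I) (hw : a w ≠ 0) : D.C ^ 3 * D.ω w = 1 :=
    Complex.eq_one_of_sum_mul_eq_sum ha (fun w => by simp [D.C_abs, D.ω_abs]) htwist hw
  have hC : D.C ^ 3 = 1 := by
    have ha_one : a D.one ≠ 0 := by
      have := ha_eq D.one
      rw [hnorm, mul_one] at this
      exact_mod_cast this ▸ D.S_one_ne_zero D.one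
    simpa [D.ω_one] using hunit D.one ha_one
  refine mulVec_eq_self_of_modular_relation D.mulVec_S_injective
    D.T_mul_S_mul_T_mul_S_mul_T hC (D.T_mulVec_eq_smul hphase) (D.T_mulVec_eq_smul fun w hw => ?_)
  have haw : a w ≠ 0 := fun h => hw (by rw [hSm]; simp [h])
  simpa [hC] using hunit w haw

end ModularDatum

namespace CosetSpectralSystem

open ModularDatum

variable {I A X E : Type*} [Fintype I] [DecidableEq I] [Fintype A] [DecidableEq A]
  [Fintype X] [DecidableEq X] [Fintype E] (𝒮 : CosetSpectralSystem I A X E)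

/-- Conjugating the `A × X` factor turns the phase condition into `ω = 1` on the support of `M`. -/
def datum : ModularDatum (I × A × X) := 𝒮.G.prod (𝒮.H.prod 𝒮.Q).conj

def vec (v : I × A × X) : ℂ := 𝒮.M v.1 v.2.1 v.2.2

def weight (w : I × A × X) : ℝ := ∑ e with (𝒮.k e, 𝒮.δ e, 𝒮.ζ e) = w, 𝒮.p e

lemma datum_S_apply (i j : I) (α β : A) (x y : X) :
    𝒮.datum.S (i, α, x) (j, β, y) = 𝒮.G.S i j * (star (𝒮.H.S α β) * star (𝒮.Q.S x y)) := by
  rw [datum, prod_S_apply, conj_S_apply, prod_S_apply, star_mul']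

lemma datum_S_bar_apply (v w : I × A × X) :
    𝒮.datum.S (𝒮.datum.bar v) w =
      𝒮.G.S (𝒮.G.bar v.1) w.1 * (𝒮.H.S v.2.1 w.2.1 * 𝒮.Q.S v.2.2 w.2.2) :=
  congrArg (𝒮.G.S (𝒮.G.bar v.1) w.1 * ·) ((𝒮.H.prod 𝒮.Q).conj_S_bar v.2 w.2)

lemma datum_S_one_apply (w : I × A × X) :
    𝒮.datum.S 𝒮.datum.one w =
      𝒮.G.S 𝒮.G.one w.1 * (𝒮.H.S 𝒮.H.one w.2.1 * 𝒮.Q.S 𝒮.Q.one w.2.2) :=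
  congrArg (𝒮.G.S 𝒮.G.one w.1 * ·) ((𝒮.H.prod 𝒮.Q).conj_S_one w.2)

lemma vec_eq_star_S_mulVec :
    𝒮.vec = star 𝒮.datum.S *ᵥ fun w => (𝒮.weight w : ℂ) / 𝒮.datum.S 𝒮.datum.one w := by
  funext v
  simp only [vec, 𝒮.spec, mulVec, dotProduct, star_S_apply, weight, Complex.ofReal_sum,
    Finset.sum_div, Finset.mul_sum]
  rw [← Finset.sum_fiberwise Finset.univ fun e => (𝒮.k e, 𝒮.δ e, 𝒮.ζ e)]
  refine Finset.sum_congr rfl fun w _ => Finset.sum_congr rfl fun e he => ?_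
  rw [← (Finset.mem_filter.mp he).2, datum_S_bar_apply, datum_S_one_apply]
  ring

lemma weight_nonneg (w : I × A × X) : 0 ≤ 𝒮.weight w :=
  Finset.sum_nonneg fun e _ => 𝒮.p_nonneg e

lemma vec_one : 𝒮.vec 𝒮.datum.one = 1 := by
  simp [vec, datum, prod, conj, 𝒮.M_vac]

lemma S_mulVec_vec_one : (𝒮.datum.S *ᵥ 𝒮.vec) 𝒮.datum.one = 1 := by
  rw [← 𝒮.norm_one]
  simp only [mulVec, dotProduct, Fintype.sum_prod_type]
  refine Finset.sum_congr rfl fun j _ => Finset.sum_congr rfl fun β _ =>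
    Finset.sum_congr rfl fun y _ => ?_
  rw [show 𝒮.datum.one = (𝒮.G.one, 𝒮.H.one, 𝒮.Q.one) from rfl, datum_S_apply, vec]
  ring

lemma datum_ω_eq_one (v : I × A × X) (hv : 𝒮.vec v ≠ 0) : 𝒮.datum.ω v = 1 := by
  obtain ⟨j, β, y⟩ := v
  have hω := 𝒮.phase j β y fun h => hv (by simp [vec, h])
  change 𝒮.G.ω j * star (𝒮.H.ω β * 𝒮.Q.ω y) = 1
  rw [hω, mul_left_comm, mul_inv_cancel₀ (𝒮.H.ω_ne_zero β), mul_one, ω_mul_star_ω]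

theorem M_eq_sum_S_mul_star_S_mul_star_S (i : I) (α : A) (x : X) :
    (𝒮.M i α x : ℂ) =
      ∑ j, ∑ β, ∑ y, 𝒮.G.S i j * star (𝒮.H.S α β) * star (𝒮.Q.S x y) * 𝒮.M j β y := by
  have h := congrFun (𝒮.datum.S_mulVec_eq_self 𝒮.weight_nonneg 𝒮.vec_eq_star_S_mulVec 𝒮.vec_one
    𝒮.S_mulVec_vec_one 𝒮.datum_ω_eq_one) (i, α, x)
  simp only [mulVec, dotProduct, Fintype.sum_prod_type, datum_S_apply, vec] at h
  rw [← h]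
  refine Finset.sum_congr rfl fun j _ => Finset.sum_congr rfl fun β _ =>
    Finset.sum_congr rfl fun y _ => by ring

end CosetSpectralSystem

/-- Proposition 3.1 (2):
`Σ_x M(i,α,x) S̈_{xz} = Σ_{j,β} S_{ij} conj(Ṡ_{αβ}) M(j,β,z)`. -/
theorem cosetSpectralSystem_prop31_two {I A X E : Type*}
    [Fintype I] [DecidableEq I] [Fintype A] [DecidableEq A]
    [Fintype X] [DecidableEq X] [Fintype E]
    (𝒮 : CosetSpectralSystem I A X E) (i : I) (α : A) (z : X) :
    ∑ x, (𝒮.M i α x : ℂ) * 𝒮.Q.S x z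
      = ∑ j, ∑ β, 𝒮.G.S i j * star (𝒮.H.S α β) * (𝒮.M j β z : ℂ) := by
  calc ∑ x, (𝒮.M i α x : ℂ) * 𝒮.Q.S x z
      = ∑ x, ∑ j, ∑ β, ∑ y, 𝒮.G.S i j * star (𝒮.H.S α β) * 𝒮.M j β y *
          (star (𝒮.Q.S x y) * 𝒮.Q.S x z) := by
        refine Finset.sum_congr rfl fun x _ => ?_
        simp only [𝒮.M_eq_sum_S_mul_star_S_mul_star_S i α x, Finset.sum_mul]
        refine Finset.sum_congr rfl fun j _ => Finset.sum_congr rfl fun β _ =>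
          Finset.sum_congr rfl fun y _ => by ring
    _ = ∑ j, ∑ β, 𝒮.G.S i j * star (𝒮.H.S α β) *
          ∑ y, 𝒮.M j β y * ∑ x, star (𝒮.Q.S x y) * 𝒮.Q.S x z := by
        simp only [Finset.mul_sum, ← mul_assoc]
        rw [Finset.sum_comm]
        refine Finset.sum_congr rfl fun j _ => ?_
        rw [Finset.sum_comm]
        refine Finset.sum_congr rfl fun β _ => ?_
        rw [Finset.sum_comm]
    _ = ∑ j, ∑ β, 𝒮.G.S i j * star (𝒮.H.S α β) * (𝒮.M j β z : ℂ) := by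
        simp only [𝒮.Q.sum_star_S_mul_S, mul_ite, mul_one, mul_zero, Finset.sum_ite_eq',
          Finset.mem_univ, if_true]
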